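/- Let Z be an abelian group, let A ⊆ Z be finite and nonempty, let K ≥ 2 be the real number with |A − A| = K|A|, let 0 ≤ ε ≤ 1, and suppose E(A) ≤ K^{−(1−ε)}. Then there exist a set T ⊆ A − A and a real exponent 0 ≤ β ≤ 1 such that: (i) |A[t]| ≥ |A|/(2K) for all t ∈ T; (ii) K^β |A| ≤ |A[t] − A| ≤ 2 K^β |A| for all t ∈ T; and (iii) |T| ≥ K^{1−ε} |A| / (4 (1 + log₂ K)). -/

import Mathlib

open Finset Pointwise
open scoped Classical

/-- The additive energy `E(A) = |A|⁻³ · |{(a₁,a₂,a₃,a₄) ∈ A⁴ : a₁ − a₂ = a₃ − a₄}|`. -/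
noncomputable def energy {Z : Type*} [AddCommGroup Z] [DecidableEq Z] (A : Finset Z) : ℝ :=
  (((A ×ˢ A ×ˢ A ×ˢ A).filter
      (fun x => x.1 - x.2.1 = x.2.2.1 - x.2.2.2)).card : ℝ) / (A.card : ℝ) ^ 3

/-- `A[t] = (A + t) ∩ A`. -/
def shiftInter {Z : Type*} [AddCommGroup Z] [DecidableEq Z] (A : Finset Z) (t : Z) : Finset Z :=
  (A.image (fun a => a + t)) ∩ A

/-!
With r(t) = |A[t]| one has Σ_{t ∈ A−A} r(t) = |A|² and Σ r(t)² = |A|³ E(A). Differences with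
r(t) < |A|/(2K) carry at most half of the first sum, so by Cauchy–Schwarz there are at least
|A|/(4E(A)) ≥ K^{1−ε}|A|/4 popular differences. For a popular t the set A[t] is nonempty, so
|A| ≤ |A[t] − A| ≤ |A − A| = K|A|; the ratio |A[t] − A|/|A| lies in one of at most 1 + log₂ K
dyadic ranges [2^j, 2^{j+1}), and the most frequent one gives T, with β chosen so that K^β = 2^j.
-/

namespace Real

lemma two_pow_floor_logb_le {x : ℝ} (hx : 1 ≤ x) : (2 : ℝ) ^ ⌊logb 2 x⌋₊ ≤ x := by
  rw [← rpow_natCast, ← le_logb_iff_rpow_le one_lt_two (by linarith)]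
  exact Nat.floor_le (logb_nonneg one_lt_two hx)

lemma lt_two_pow_floor_logb_add_one {x : ℝ} (hx : 0 < x) :
    x < (2 : ℝ) ^ (⌊logb 2 x⌋₊ + 1) := by
  rw [← rpow_natCast, ← logb_lt_iff_lt_rpow one_lt_two hx]
  exact_mod_cast Nat.lt_floor_add_one _

lemma rpow_div_logb_two {K : ℝ} (hK : 1 < K) (j : ℝ) : K ^ (j / logb 2 K) = 2 ^ j := by
  have hlog : logb 2 K ≠ 0 := (logb_pos one_lt_two hK).ne'
  calc K ^ (j / logb 2 K) = (2 ^ logb 2 K) ^ (j / logb 2 K) := by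
        rw [rpow_logb two_pos (by norm_num) (by linarith)]
    _ = 2 ^ j := by rw [← rpow_mul zero_le_two, mul_div_cancel₀ _ hlog]

end Real

open Real in
lemma Finset.exists_dyadic_subset {ι : Type*} (S : Finset ι) (x : ι → ℝ) {K : ℝ} (hK : 1 ≤ K)
    (hx : ∀ t ∈ S, 1 ≤ x t ∧ x t ≤ K) :
    ∃ T ⊆ S, ∃ j : ℕ, (j : ℝ) ≤ logb 2 K ∧
      (∀ t ∈ T, 2 ^ j ≤ x t ∧ x t < 2 ^ (j + 1)) ∧ (#S : ℝ) ≤ (1 + logb 2 K) * #T := by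
  set m := ⌊logb 2 K⌋₊
  have hm : (m : ℝ) ≤ logb 2 K := Nat.floor_le (logb_nonneg one_lt_two hK)
  have hmaps : ∀ t ∈ S, ⌊logb 2 (x t)⌋₊ ∈ range (m + 1) := fun t ht =>
    mem_range_succ_iff.2 <| Nat.floor_mono <|
      logb_le_logb_of_le one_lt_two (by linarith [(hx t ht).1]) (hx t ht).2
  obtain ⟨j, hj, hT⟩ := exists_le_card_fiber_of_nsmul_le_card_of_maps_to hmaps
    nonempty_range_add_one (b := (#S : ℝ) / (m + 1)) (by
      rw [card_range, nsmul_eq_mul]; push_cast; rw [mul_div_cancel₀ _ (by positivity)])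
  refine ⟨{t ∈ S | ⌊logb 2 (x t)⌋₊ = j}, filter_subset _ _, j,
    (Nat.cast_le.2 (mem_range_succ_iff.1 hj)).trans hm, fun t ht => ?_, ?_⟩
  · obtain ⟨htS, rfl⟩ := mem_filter.1 ht
    exact ⟨two_pow_floor_logb_le (hx t htS).1,
      lt_two_pow_floor_logb_add_one (by linarith [(hx t htS).1])⟩
  · rw [div_le_iff₀' (by positivity)] at hT
    exact hT.trans (mul_le_mul_of_nonneg_right (by linarith) (Nat.cast_nonneg _))

lemma Finset.sum_sub_mul_card_le_sum_filter_le {ι : Type*} (D : Finset ι) (r : ι → ℝ) {δ : ℝ}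
    (hδ : 0 ≤ δ) : ∑ t ∈ D, r t - δ * #D ≤ ∑ t ∈ D with δ ≤ r t, r t := by
  have hsmall : ∑ t ∈ D with ¬δ ≤ r t, r t ≤ δ * #D :=
    calc ∑ t ∈ D with ¬δ ≤ r t, r t ≤ #{t ∈ D | ¬δ ≤ r t} • δ :=
          sum_le_card_nsmul _ _ _ fun t ht => (not_le.1 (mem_filter.1 ht).2).le
      _ ≤ δ * #D := by
          rw [nsmul_eq_mul, mul_comm]
          exact mul_le_mul_of_nonneg_left (by exact_mod_cast card_filter_le _ _) hδ
  linarith [sum_filter_add_sum_filter_not D (δ ≤ r ·) r]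

section AdditiveEnergy

variable {Z : Type*} [AddCommGroup Z] [DecidableEq Z] (A : Finset Z)

lemma card_shiftInter_eq (t : Z) : #(shiftInter A t) = #{p ∈ A ×ˢ A | p.1 - p.2 = t} := by
  refine card_nbij' (fun a => (a, a - t)) Prod.fst ?_ ?_ (fun _ _ => rfl) ?_
  · intro a ha
    simp only [shiftInter, mem_coe, mem_inter, mem_image] at ha
    obtain ⟨⟨b, hb, rfl⟩, hbt⟩ := ha
    simp [hb, hbt]
  · intro p hp
    simp only [mem_coe, mem_filter, mem_product] at hp
    obtain ⟨⟨h1, h2⟩, rfl⟩ := hp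
    simp [shiftInter, h1, h2]
  · intro p hp
    simp only [mem_coe, mem_filter] at hp
    simp [← hp.2]

lemma sum_card_shiftInter : ∑ t ∈ A - A, #(shiftInter A t) = #A ^ 2 := by
  simp_rw [card_shiftInter_eq]
  rw [← card_eq_sum_card_fiberwise fun p hp => sub_mem_sub (mem_product.1 hp).1
    (mem_product.1 hp).2, card_product, sq]

lemma sum_card_shiftInter_sq :
    ∑ t ∈ A - A, #(shiftInter A t) ^ 2 =
      #{x ∈ A ×ˢ A ×ˢ A ×ˢ A | x.1 - x.2.1 = x.2.2.1 - x.2.2.2} := by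
  rw [card_eq_sum_card_fiberwise (f := fun x => x.1 - x.2.1) (t := A - A) fun x hx => by
    simp only [mem_coe, mem_filter, mem_product] at hx; exact sub_mem_sub hx.1.1 hx.1.2.1]
  refine sum_congr rfl fun t _ => ?_
  rw [card_shiftInter_eq, sq, ← card_product]
  refine card_equiv (Equiv.prodAssoc Z Z (Z × Z)) fun x => ?_
  simp only [mem_filter, mem_product, Equiv.prodAssoc_apply]
  grind

lemma energy_mul_card_pow_three (hA : A.Nonempty) :
    energy A * #A ^ 3 = ∑ t ∈ A - A, (#(shiftInter A t) : ℝ) ^ 2 := by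
  rw [energy, div_mul_cancel₀ _ (by positivity), ← sum_card_shiftInter_sq]
  push_cast
  rfl

lemma shiftInter_sub_subset (t : Z) : shiftInter A t - A ⊆ A - A :=
  sub_subset_sub inter_subset_right subset_rfl

/-- The differences `t` with `|A[t]| ≥ |A|/(2K)`, where `|A - A| = K|A|`. -/
noncomputable def popularDifferences : Finset Z :=
  {t ∈ A - A | (#A : ℝ) ^ 2 / (2 * #(A - A)) ≤ #(shiftInter A t)}

lemma shiftInter_nonempty_of_mem_popularDifferences (hA : A.Nonempty) {t : Z}
    (ht : t ∈ popularDifferences A) : (shiftInter A t).Nonempty := by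
  have hAA : (0 : ℝ) < #(A - A) := by exact_mod_cast (hA.sub hA).card_pos
  have hA0 : (0 : ℝ) < #A := by exact_mod_cast hA.card_pos
  exact card_pos.1 <| by exact_mod_cast (by positivity : (0 : ℝ) < _).trans_le (mem_filter.1 ht).2

lemma card_le_four_mul_energy_mul_card_popularDifferences (hA : A.Nonempty) :
    (#A : ℝ) ≤ 4 * energy A * #(popularDifferences A) := by
  set P := popularDifferences A
  have hAA : (0 : ℝ) < #(A - A) := by exact_mod_cast (hA.sub hA).card_pos
  have hA3 : (0 : ℝ) < #A ^ 3 := by positivity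
  have hsum : (#A : ℝ) ^ 2 / 2 ≤ ∑ t ∈ P, (#(shiftInter A t) : ℝ) := by
    have := sum_sub_mul_card_le_sum_filter_le (A - A) (fun t => (#(shiftInter A t) : ℝ))
      (δ := (#A : ℝ) ^ 2 / (2 * #(A - A))) (by positivity)
    have hδ : (#A : ℝ) ^ 2 / (2 * #(A - A)) * #(A - A) = #A ^ 2 / 2 := by field_simp
    rw [← Nat.cast_sum, sum_card_shiftInter, hδ] at this
    push_cast at this
    exact (by ring : (#A : ℝ) ^ 2 / 2 = #A ^ 2 - #A ^ 2 / 2).trans_le this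
  have hsq : ∑ t ∈ P, (#(shiftInter A t) : ℝ) ^ 2 ≤ energy A * #A ^ 3 := by
    rw [energy_mul_card_pow_three A hA]
    exact sum_le_sum_of_subset_of_nonneg (filter_subset _ _) fun _ _ _ => sq_nonneg _
  have hCS : ((#A : ℝ) ^ 2 / 2) ^ 2 ≤ #P * (energy A * #A ^ 3) :=
    calc ((#A : ℝ) ^ 2 / 2) ^ 2 ≤ (∑ t ∈ P, (#(shiftInter A t) : ℝ)) ^ 2 := by gcongr
      _ ≤ #P * ∑ t ∈ P, (#(shiftInter A t) : ℝ) ^ 2 := sq_sum_le_card_mul_sum_sq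
      _ ≤ #P * (energy A * #A ^ 3) := by gcongr
  refine le_of_mul_le_mul_left ?_ hA3
  nlinarith

end AdditiveEnergy

theorem statement10_general {Z : Type*} [AddCommGroup Z] [DecidableEq Z]
    (A : Finset Z) (hA : A.Nonempty) (K : ℝ) (hK : 2 ≤ K)
    (hKdef : ((A - A).card : ℝ) = K * (A.card : ℝ))
    (ε : ℝ)
    (hE : energy A ≤ K ^ (-(1 - ε))) :
    ∃ (T : Finset Z) (β : ℝ), T ⊆ A - A ∧ 0 ≤ β ∧ β ≤ 1 ∧
      (∀ t ∈ T, (A.card : ℝ) / (2 * K) ≤ ((shiftInter A t).card : ℝ)) ∧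
      (∀ t ∈ T, K ^ β * (A.card : ℝ) ≤ (((shiftInter A t) - A).card : ℝ) ∧
        (((shiftInter A t) - A).card : ℝ) ≤ 2 * K ^ β * (A.card : ℝ)) ∧
      K ^ (1 - ε) * (A.card : ℝ) / (4 * (1 + Real.logb 2 K)) ≤ (T.card : ℝ) := by
  have hK1 : 1 < K := by linarith
  have hA0 : (0 : ℝ) < #A := by exact_mod_cast hA.card_pos
  set P := popularDifferences A
  have hpopular : ∀ t ∈ P, (#A : ℝ) / (2 * K) ≤ #(shiftInter A t) := fun t ht => by
    have hδ : (#A : ℝ) ^ 2 / (2 * (K * #A)) = #A / (2 * K) := by field_simp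
    simpa only [hKdef, hδ] using (mem_filter.1 ht).2
  have hcardP : K ^ (1 - ε) * #A ≤ 4 * #P :=
    calc K ^ (1 - ε) * #A ≤ K ^ (1 - ε) * (4 * K ^ (-(1 - ε)) * #P) := by
          gcongr
          exact (card_le_four_mul_energy_mul_card_popularDifferences A hA).trans (by gcongr)
      _ = 4 * #P := by rw [Real.rpow_neg (by linarith)]; field_simp
  have hrange : ∀ t ∈ P, 1 ≤ (#(shiftInter A t - A) : ℝ) / #A ∧
      (#(shiftInter A t - A) : ℝ) / #A ≤ K := fun t ht => by
    rw [one_le_div hA0, div_le_iff₀ hA0, ← hKdef]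
    exact ⟨mod_cast card_le_card_sub_left (shiftInter_nonempty_of_mem_popularDifferences A hA ht),
      mod_cast card_le_card (shiftInter_sub_subset A t)⟩
  obtain ⟨T, hTP, j, hj, hTdyadic, hPT⟩ := exists_dyadic_subset P _ hK1.le hrange
  have hlog : 0 < Real.logb 2 K := Real.logb_pos one_lt_two hK1
  refine ⟨T, j / Real.logb 2 K, hTP.trans (filter_subset _ _), by positivity,
    div_le_one_of_le₀ hj hlog.le, fun t ht => hpopular t (hTP ht), fun t ht => ?_, ?_⟩
  · obtain ⟨hlow, hhigh⟩ := hTdyadic t ht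
    rw [le_div_iff₀ hA0] at hlow
    rw [div_lt_iff₀ hA0, pow_succ] at hhigh
    rw [Real.rpow_div_logb_two hK1, Real.rpow_natCast]
    exact ⟨hlow, by linarith⟩
  · rw [div_le_iff₀ (by positivity)]
    linarith

/-- If `|A − A| = K|A|` with `K ≥ 2`, `0 ≤ ε ≤ 1` and `E(A) ≤ K^{−(1−ε)}`, then there are
`T ⊆ A − A` and `0 ≤ β ≤ 1` with `|A[t]| ≥ |A|/(2K)` and `K^β|A| ≤ |A[t] − A| ≤ 2K^β|A|`
for all `t ∈ T`, and `|T| ≥ K^{1−ε}|A|/(4(1 + log₂ K))`. -/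
theorem statement10 {Z : Type*} [AddCommGroup Z] [DecidableEq Z]
    (A : Finset Z) (hA : A.Nonempty) (K : ℝ) (hK : 2 ≤ K)
    (hKdef : ((A - A).card : ℝ) = K * (A.card : ℝ))
    (ε : ℝ) (hε0 : 0 ≤ ε) (hε1 : ε ≤ 1)
    (hE : energy A ≤ K ^ (-(1 - ε))) :
    ∃ (T : Finset Z) (β : ℝ), T ⊆ A - A ∧ 0 ≤ β ∧ β ≤ 1 ∧
      (∀ t ∈ T, (A.card : ℝ) / (2 * K) ≤ ((shiftInter A t).card : ℝ)) ∧
      (∀ t ∈ T, K ^ β * (A.card : ℝ) ≤ (((shiftInter A t) - A).card : ℝ) ∧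
        (((shiftInter A t) - A).card : ℝ) ≤ 2 * K ^ β * (A.card : ℝ)) ∧
      K ^ (1 - ε) * (A.card : ℝ) / (4 * (1 + Real.logb 2 K)) ≤ (T.card : ℝ) :=
  statement10_general A hA K hK hKdef ε hE
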